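/- Fix an integer d ≥ 1 and positive reals λ, θ, t. On a probability space let M be an ℕ-valued random variable with Poisson distribution of mean λt, let (T_i)_{i∈ℕ} be i.i.d. uniform on [0,t], and let U be uniform on [0,1], with M, (T_i), U jointly independent. Define S := { U ≤ exp( −θ Σ_{i<M} (t − T_i)^{d+1} ) }. Then for every m ∈ ℕ, P( S ∩ {M = m} ) = e^{−λ t} ( λ ∫_0^t e^{−θ r^{d+1}} dr )^m / m!. Consequently P( {M = m} | S ) = e^{−λ t φ(t)} ( λ t φ(t) )^m / m!, where t φ(t) := ∫_0^t e^{−θ r^{d+1}} dr; that is, conditioned on S, M is Poisson with mean λ t φ(t). -/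

import Mathlib

/-!
Given the arrival data, `U` is uniform and independent of it, so the survival event has
conditional probability `exp (-θ ∑_{i<M} (t - T_i)^(d+1)) = ∏_{i<M} exp (-θ (t - T_i)^(d+1))`.
On `{M = k}` the `T_i` are independent of `M` and i.i.d. uniform on `[0, t]`, so this averages
to `φ^k` with `φ = (1/t) ∫₀ᵗ exp (-θ r^(d+1)) dr`: the Poisson weight of `k` is thinned to
`e^{-λt} (λtφ)^k / k!`. Summing over `k` gives `P(S) = e^{λtφ - λt}`, and dividing by it
leaves the Poisson law of mean `λtφ`.
-/

open MeasureTheory ProbabilityTheory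

section

variable {Ω : Type*} [MeasurableSpace Ω] {μ : Measure Ω}

lemma volume_restrict_unitInterval_Iic {c : ℝ} (hc : c ≤ 1) :
    volume.restrict (Set.Icc (0 : ℝ) 1) (Set.Iic c) = ENNReal.ofReal c := by
  rw [Measure.restrict_apply measurableSet_Iic, Set.inter_comm, ← Set.Ici_inter_Iic,
    Set.inter_assoc, Set.Iic_inter_Iic, min_eq_right hc, Set.Ici_inter_Iic, Real.volume_Icc,
    sub_zero]

lemma measure_le_inter_preimage_eq_setLIntegral_of_uniform [IsFiniteMeasure μ] {β : Type*}
    [MeasurableSpace β] {U : Ω → ℝ} {V : Ω → β} {g : β → ℝ} {A : Set β}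
    (hUm : Measurable U) (hVm : Measurable V) (hU : μ.map U = volume.restrict (Set.Icc 0 1))
    (hUV : IndepFun U V μ) (hg : Measurable g) (hg1 : ∀ᵐ ω ∂μ, g (V ω) ≤ 1)
    (hA : MeasurableSet A) :
    μ ({ω | U ω ≤ g (V ω)} ∩ V ⁻¹' A) = ∫⁻ ω in V ⁻¹' A, ENNReal.ofReal (g (V ω)) ∂μ := by
  set B : Set (ℝ × β) := {p | p.1 ≤ g p.2} ∩ Prod.snd ⁻¹' A
  have hB : MeasurableSet B :=
    (measurableSet_le measurable_fst (hg.comp measurable_snd)).inter (measurable_snd hA)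
  calc _ = μ.map (fun ω => (U ω, V ω)) B := (Measure.map_apply (hUm.prodMk hVm) hB).symm
    _ = ∫⁻ v, volume.restrict (Set.Icc (0 : ℝ) 1) ((fun u => (u, v)) ⁻¹' B) ∂(μ.map V) := by
        rw [(indepFun_iff_map_prod_eq_prod_map_map hUm.aemeasurable hVm.aemeasurable).mp hUV,
          Measure.prod_apply_symm hB, hU]
    _ = ∫⁻ ω, (V ⁻¹' A).indicator (fun ω => ENNReal.ofReal (g (V ω))) ω ∂μ := by
        rw [lintegral_map (measurable_measure_prodMk_right hB) hVm]
        refine lintegral_congr_ae (hg1.mono fun ω hω => ?_)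
        by_cases hv : V ω ∈ A
        · have hsection : (fun u => (u, V ω)) ⁻¹' B = Set.Iic (g (V ω)) := by
            ext u; simp [B, hv]
          simp [hsection, hv, volume_restrict_unitInterval_Iic hω]
        · have hsection : (fun u => (u, V ω)) ⁻¹' B = ∅ := by
            ext u; simp [B, hv]
          simp [hsection, hv]
    _ = ∫⁻ ω in V ⁻¹' A, ENNReal.ofReal (g (V ω)) ∂μ := lintegral_indicator (hVm hA) _

lemma ProbabilityTheory.IndepFun.setLIntegral_comp_eq_mul {α β : Type*} [MeasurableSpace α]
    [MeasurableSpace β] {X : Ω → α} {Y : Ω → β} (hXY : IndepFun X Y μ) (hXm : Measurable X)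
    (hYm : Measurable Y) {A : Set α} (hA : MeasurableSet A) {f : β → ENNReal} (hf : Measurable f) :
    ∫⁻ ω in X ⁻¹' A, f (Y ω) ∂μ = μ (X ⁻¹' A) * ∫⁻ ω, f (Y ω) ∂μ := by
  have hprod : (X ⁻¹' A).indicator (fun ω => f (Y ω)) = (A.indicator 1 ∘ X) * (f ∘ Y) := by
    ext ω; by_cases hω : X ω ∈ A <;> simp [hω]
  rw [← lintegral_indicator (hXm hA), hprod, ← lintegral_indicator_one (hXm hA)]
  exact lintegral_mul_eq_lintegral_mul_lintegral_of_indepFun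
    ((measurable_one.indicator hA).comp hXm) (hf.comp hYm)
    (hXY.comp (measurable_one.indicator hA) hf)

lemma lintegral_ofReal_exp_sum_of_iIndepFun {ι β : Type*} [MeasurableSpace β]
    {T : ι → Ω → β} (hT : iIndepFun T μ) (hTm : ∀ i, Measurable (T i)) {f : β → ℝ}
    (hf : Measurable f) (s : Finset ι) :
    ∫⁻ ω, ENNReal.ofReal (Real.exp (∑ i ∈ s, f (T i ω))) ∂μ =
      ∏ i ∈ s, ∫⁻ ω, ENNReal.ofReal (Real.exp (f (T i ω))) ∂μ := by
  simp_rw [Real.exp_sum, ENNReal.ofReal_prod_of_nonneg fun i _ => (Real.exp_pos _).le]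
  exact lintegral_prod_eq_prod_lintegral_of_indepFun s _
    (hT.comp _ fun _ => (Real.measurable_exp.comp hf).ennreal_ofReal)
    fun i => ((Real.measurable_exp.comp hf).ennreal_ofReal).comp (hTm i)

lemma ae_mem_Icc_of_map_eq_smul_restrict {X : Ω → ℝ} (hXm : Measurable X) {a b : ℝ}
    {c : ENNReal} (hX : μ.map X = c • volume.restrict (Set.Icc a b)) :
    ∀ᵐ ω ∂μ, X ω ∈ Set.Icc a b :=
  ae_of_ae_map hXm.aemeasurable <|
    hX ▸ Measure.ae_smul_measure (ae_restrict_mem measurableSet_Icc) c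

lemma lintegral_ofReal_comp_sub_of_map_eq_uniform {X : Ω → ℝ} (hXm : Measurable X) {t : ℝ}
    (ht : 0 < t) (hX : μ.map X = (ENNReal.ofReal t)⁻¹ • volume.restrict (Set.Icc 0 t))
    {f : ℝ → ℝ} (hf : Continuous f) (hf0 : ∀ r, 0 ≤ f r) :
    ∫⁻ ω, ENNReal.ofReal (f (t - X ω)) ∂μ = ENNReal.ofReal ((∫ r in (0 : ℝ)..t, f r) / t) := by
  have hreflect : ∫ s in Set.Icc 0 t, f (t - s) = ∫ r in (0 : ℝ)..t, f r := by
    rw [integral_Icc_eq_integral_Ioc, ← intervalIntegral.integral_of_le ht.le,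
      intervalIntegral.integral_comp_sub_left, sub_self, sub_zero]
  rw [← lintegral_map (f := fun s => ENNReal.ofReal (f (t - s))) (by fun_prop) hXm, hX,
    lintegral_smul_measure, ← ofReal_integral_eq_lintegral_ofReal (f := fun s => f (t - s))
      (hf.comp (continuous_sub_left t)).integrableOn_Icc (.of_forall fun s => hf0 _),
    hreflect, ENNReal.ofReal_div_of_pos ht, div_eq_mul_inv, mul_comm, smul_eq_mul]

lemma measure_eq_tsum_measure_inter_fiber {M : Ω → ℕ} (hM : Measurable M) (S : Set Ω) :
    μ S = ∑' k, μ (S ∩ {ω | M ω = k}) := by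
  have hfib : ∀ k, MeasurableSet {ω | M ω = k} := fun k => hM (measurableSet_singleton k)
  calc μ S = μ.restrict S (⋃ k, {ω | M ω = k}) := by
        rw [Set.iUnion_eq_univ_iff.mpr fun ω => ⟨M ω, rfl⟩, Measure.restrict_apply_univ]
    _ = ∑' k, μ (S ∩ {ω | M ω = k}) := by
        rw [measure_iUnion (fun i j hij => Set.disjoint_left.mpr fun ω hi hj =>
          hij (hi.symm.trans hj)) hfib]
        simp_rw [Measure.restrict_apply (hfib _), Set.inter_comm]

lemma cond_eq_poisson_of_measure_inter_eq {S : Set Ω} {M : Ω → ℕ} (hM : Measurable M)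
    {a b : ℝ} (hb : 0 ≤ b) (hSM : ∀ k, μ (S ∩ {ω | M ω = k}) =
      ENNReal.ofReal (Real.exp (-a) * b ^ k / k.factorial)) (m : ℕ) :
    μ[{ω | M ω = m} | S] = ENNReal.ofReal (Real.exp (-b) * b ^ m / m.factorial) := by
  have hS : μ S = ENNReal.ofReal (Real.exp (b - a)) := by
    have hsum :
        HasSum (fun k : ℕ => Real.exp (-a) * b ^ k / k.factorial) (Real.exp (b - a)) := by
      simp_rw [mul_div_assoc, sub_eq_neg_add, Real.exp_add, Real.exp_eq_exp_ℝ]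
      exact (NormedSpace.expSeries_div_hasSum_exp b).mul_left _
    rw [measure_eq_tsum_measure_inter_fiber hM, funext hSM,
      ← ENNReal.ofReal_tsum_of_nonneg (fun k => by positivity) hsum.summable, hsum.tsum_eq]
  rw [cond_apply' (show MeasurableSet {ω | M ω = m} from hM (measurableSet_singleton m)), hS,
    hSM, ← ENNReal.ofReal_inv_of_pos (Real.exp_pos _), ← ENNReal.ofReal_mul (by positivity),
    ← Real.exp_neg]
  congr 1
  rw [← mul_div_assoc, ← mul_assoc, ← Real.exp_add, show -(b - a) + -a = -b by ring]

lemma measure_survival_inter_eq_mul_pow [IsFiniteMeasure μ] (d : ℕ) {θ t : ℝ} (hθ : 0 ≤ θ)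
    (ht : 0 < t) {M : Ω → ℕ} {T : ℕ → Ω → ℝ} {U : Ω → ℝ} (hMm : Measurable M)
    (hTm : ∀ i, Measurable (T i)) (hUm : Measurable U)
    (hT : ∀ i, μ.map (T i) = (ENNReal.ofReal t)⁻¹ • volume.restrict (Set.Icc 0 t))
    (hU : μ.map U = volume.restrict (Set.Icc 0 1)) (hTindep : iIndepFun T μ)
    (hMT : IndepFun M (fun ω i => T i ω) μ)
    (hU_MT : IndepFun U (fun ω => (M ω, fun i => T i ω)) μ) (k : ℕ) :
    μ ({ω | U ω ≤ Real.exp (-θ * ∑ i ∈ Finset.range (M ω), (t - T i ω) ^ (d + 1))} ∩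
        {ω | M ω = k}) =
      μ {ω | M ω = k} *
        ENNReal.ofReal ((∫ r in (0 : ℝ)..t, Real.exp (-θ * r ^ (d + 1))) / t) ^ k := by
  have hsurvival : ∀ᵐ ω ∂μ,
      Real.exp (-θ * ∑ i ∈ Finset.range (M ω), (t - T i ω) ^ (d + 1)) ≤ 1 := by
    filter_upwards [ae_all_iff.2 fun i => ae_mem_Icc_of_map_eq_smul_restrict (hTm i) (hT i)]
      with ω hω
    exact Real.exp_le_one_iff.2 <| mul_nonpos_of_nonpos_of_nonneg (neg_nonpos.2 hθ) <|
      Finset.sum_nonneg fun i _ => pow_nonneg (sub_nonneg.2 (hω i).2) _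
  have hTvec : Measurable fun ω i => T i ω := measurable_pi_lambda _ hTm
  calc _ = ∫⁻ ω in M ⁻¹' {k}, ENNReal.ofReal
        (Real.exp (∑ i ∈ Finset.range k, -θ * (t - T i ω) ^ (d + 1))) ∂μ := by
        refine (measure_le_inter_preimage_eq_setLIntegral_of_uniform
          (V := fun ω => (M ω, fun i => T i ω)) (A := Prod.fst ⁻¹' {k})
          (g := fun p => Real.exp (-θ * ∑ i ∈ Finset.range p.1, (t - p.2 i) ^ (d + 1)))
          hUm (hMm.prodMk hTvec) hU hU_MT ?_ hsurvival
          (measurable_fst (measurableSet_singleton k))).trans ?_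
        · exact measurable_from_prod_countable_right fun n => by dsimp only; fun_prop
        · refine setLIntegral_congr_fun (hMm (measurableSet_singleton k)) fun ω hω => ?_
          simp only [Set.mem_preimage, Set.mem_singleton_iff] at hω
          simp [hω, Finset.mul_sum]
    _ = μ {ω | M ω = k} * ∏ i ∈ Finset.range k,
          ∫⁻ ω, ENNReal.ofReal (Real.exp (-θ * (t - T i ω) ^ (d + 1))) ∂μ := by
        rw [hMT.setLIntegral_comp_eq_mul hMm hTvec (measurableSet_singleton k)
          (f := fun x => ENNReal.ofReal
            (Real.exp (∑ i ∈ Finset.range k, -θ * (t - x i) ^ (d + 1)))) (by fun_prop)]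
        exact congrArg _ (lintegral_ofReal_exp_sum_of_iIndepFun hTindep hTm
          (f := fun s => -θ * (t - s) ^ (d + 1)) (by fun_prop) _)
    _ = _ := by
        simp only [lintegral_ofReal_comp_sub_of_map_eq_uniform (hTm _) ht (hT _)
          (f := fun r => Real.exp (-θ * r ^ (d + 1))) (by fun_prop)
          (fun _ => (Real.exp_pos _).le), Finset.prod_const, Finset.card_range]

end

theorem conditional_poisson_number_of_clones_general
    {Ω : Type*} [MeasureSpace Ω] [IsProbabilityMeasure (volume : Measure Ω)]
    (d : ℕ) (lam θ t : ℝ) (hlam : 0 < lam) (hθ : 0 < θ) (ht : 0 < t)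
    (M : Ω → ℕ) (T : ℕ → Ω → ℝ) (U : Ω → ℝ)
    (hMmeas : Measurable M) (hTmeas : ∀ i, Measurable (T i)) (hUmeas : Measurable U)
    (hM : ∀ m : ℕ, volume {ω | M ω = m} =
      ENNReal.ofReal (Real.exp (-(lam * t)) * (lam * t) ^ m / m.factorial))
    (hT : ∀ i, Measure.map (T i) volume =
      (ENNReal.ofReal t)⁻¹ • volume.restrict (Set.Icc 0 t))
    (hU : Measure.map U volume = volume.restrict (Set.Icc (0:ℝ) 1))
    (hTindep : iIndepFun T volume)
    (hMT : IndepFun M (fun ω => fun i => T i ω) volume)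
    (hU_MT : IndepFun U (fun ω => (M ω, fun i => T i ω)) volume)
    (m : ℕ) :
    volume ({ω | U ω ≤
          Real.exp (-θ * ∑ i ∈ Finset.range (M ω), (t - T i ω) ^ (d + 1))} ∩
        {ω | M ω = m}) =
      ENNReal.ofReal (Real.exp (-(lam * t)) *
        (lam * ∫ r in (0:ℝ)..t, Real.exp (-θ * r ^ (d + 1))) ^ m / m.factorial) ∧
    (volume : Measure Ω)[|{ω | U ω ≤
          Real.exp (-θ * ∑ i ∈ Finset.range (M ω), (t - T i ω) ^ (d + 1))}]
        {ω | M ω = m} =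
      ENNReal.ofReal (Real.exp (-(lam * ∫ r in (0:ℝ)..t, Real.exp (-θ * r ^ (d + 1)))) *
        (lam * ∫ r in (0:ℝ)..t, Real.exp (-θ * r ^ (d + 1))) ^ m / m.factorial) := by
  set I := ∫ r in (0:ℝ)..t, Real.exp (-θ * r ^ (d + 1))
  have hI : 0 < I := intervalIntegral.intervalIntegral_pos_of_pos_on
    (Continuous.intervalIntegrable (by fun_prop) _ _) (fun _ _ => Real.exp_pos _) ht
  have hSM : ∀ k : ℕ, volume ({ω | U ω ≤
      Real.exp (-θ * ∑ i ∈ Finset.range (M ω), (t - T i ω) ^ (d + 1))} ∩ {ω | M ω = k}) =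
      ENNReal.ofReal (Real.exp (-(lam * t)) * (lam * I) ^ k / k.factorial) := fun k => by
    rw [measure_survival_inter_eq_mul_pow d hθ.le ht hMmeas hTmeas hUmeas hT hU hTindep hMT
      hU_MT, hM k, ← ENNReal.ofReal_pow (by positivity), ← ENNReal.ofReal_mul (by positivity)]
    congr 1
    rw [mul_div_right_comm, mul_assoc, ← mul_pow, mul_assoc lam, mul_div_cancel₀ _ ht.ne']
    ring
  exact ⟨hSM m, cond_eq_poisson_of_measure_inter_eq hMmeas (by positivity) hSM m⟩

/-- Lemma 1 of the paper: with M Poisson of mean λt, (T_i) i.i.d. uniform on [0,t] and U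
uniform on [0,1], all independent, and S = {U ≤ exp(−θ Σ_{i<M}(t−T_i)^{d+1})} (= {σ₂ > t}),
one has P(S ∩ {M = m}) = e^{−λt}(λ∫₀ᵗe^{−θ r^{d+1}}dr)^m/m!, so that conditioned on S,
M is Poisson with mean λ t φ(t) = λ ∫₀ᵗ e^{−θ r^{d+1}} dr. -/
theorem conditional_poisson_number_of_clones
    {Ω : Type*} [MeasureSpace Ω] [IsProbabilityMeasure (volume : Measure Ω)]
    (d : ℕ) (hd : 1 ≤ d) (lam θ t : ℝ) (hlam : 0 < lam) (hθ : 0 < θ) (ht : 0 < t)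
    (M : Ω → ℕ) (T : ℕ → Ω → ℝ) (U : Ω → ℝ)
    (hMmeas : Measurable M) (hTmeas : ∀ i, Measurable (T i)) (hUmeas : Measurable U)
    (hM : ∀ m : ℕ, volume {ω | M ω = m} =
      ENNReal.ofReal (Real.exp (-(lam * t)) * (lam * t) ^ m / m.factorial))
    (hT : ∀ i, Measure.map (T i) volume =
      (ENNReal.ofReal t)⁻¹ • volume.restrict (Set.Icc 0 t))
    (hU : Measure.map U volume = volume.restrict (Set.Icc (0:ℝ) 1))
    (hTindep : iIndepFun T volume)
    (hMT : IndepFun M (fun ω => fun i => T i ω) volume)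
    (hU_MT : IndepFun U (fun ω => (M ω, fun i => T i ω)) volume)
    (m : ℕ) :
    volume ({ω | U ω ≤
          Real.exp (-θ * ∑ i ∈ Finset.range (M ω), (t - T i ω) ^ (d + 1))} ∩
        {ω | M ω = m}) =
      ENNReal.ofReal (Real.exp (-(lam * t)) *
        (lam * ∫ r in (0:ℝ)..t, Real.exp (-θ * r ^ (d + 1))) ^ m / m.factorial) ∧
    (volume : Measure Ω)[|{ω | U ω ≤
          Real.exp (-θ * ∑ i ∈ Finset.range (M ω), (t - T i ω) ^ (d + 1))}]
        {ω | M ω = m} =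
      ENNReal.ofReal (Real.exp (-(lam * ∫ r in (0:ℝ)..t, Real.exp (-θ * r ^ (d + 1)))) *
        (lam * ∫ r in (0:ℝ)..t, Real.exp (-θ * r ^ (d + 1))) ^ m / m.factorial) :=
  conditional_poisson_number_of_clones_general d lam θ t hlam hθ ht M T U hMmeas hTmeas hUmeas hM hT
    hU hTindep hMT hU_MT m
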